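/- arXiv:1911.05822 — 2 statements merged into one kernel-verified Lean document; each statement's English description precedes it below -/
import Mathlib

section
/- Let κ > 0, let H be standard Gaussian and S = GY with G standard Gaussian and Y ∈ {±1} (so that ρS + √(1−ρ²)H has strictly positive density on ℝ for every ρ ∈ [−1,1]), and define η(q, ρ) = E[(ρ S + H√(1 − ρ²) − 1/q)_−²] − (1 − ρ²)κ for q > 0, ρ ∈ [−1, 1]. Then the function η̄(q) = min_{−1 ≤ ρ ≤ 1} η(q, ρ) is strictly decreasing on (0, ∞). -/
open MeasureTheory ProbabilityTheory Filter Set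

/-- The negative part `(x)₋ = min x 0`. -/
noncomputable def negp (x : ℝ) : ℝ := min x 0

/-- The standard Gaussian measure on `ℝ`. -/
noncomputable def stdGaussian : Measure ℝ := gaussianReal 0 1

/-! For fixed `ρ`, raising the threshold `c = 1/q` strictly increases `E[(X_ρ - c)₋²]`, because
`X_ρ = ρS + √(1-ρ²)H` falls below any `c > 0` with positive probability: `S` and `H` are
independent and both charge every neighbourhood of `0`. The second moments of `S` and `H` make the
objective continuous in `ρ`, so the minimum over the compact `[-1, 1]` is attained at some `ρ₁`
for the smaller `q₁`; evaluating the objective for `q₂ > q₁` at the same `ρ₁` gives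
`η̄(q₂) ≤ η(q₂, ρ₁) < η(q₁, ρ₁) = η̄(q₁)`. -/

lemma StrictMonoOn.ciInf_of_isCompact {α β : Type*} [Preorder α] [TopologicalSpace β]
    {s : Set α} {K : Set β} (hK : IsCompact K) (hne : K.Nonempty) {F : α → β → ℝ}
    (hcont : ∀ a ∈ s, ContinuousOn (F a) K) (hmono : ∀ k ∈ K, StrictMonoOn (F · k) s) :
    StrictMonoOn (fun a => ⨅ k : K, F a k) s := by
  intro a ha b hb hab
  obtain ⟨k, hkK, hmin⟩ := hK.exists_isMinOn hne (hcont b hb)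
  have hbdd : BddBelow (range fun k : K => F a k) := by
    rw [← image_eq_range]
    exact hK.bddBelow_image (hcont a ha)
  calc ⨅ k : K, F a k ≤ F a k := ciInf_le hbdd ⟨k, hkK⟩
    _ < F b k := hmono k hkK ha hb hab
    _ = ⨅ k : K, F b k := (hmin.iInf_eq hkK).symm

lemma continuous_negp : Continuous negp := continuous_id.min continuous_const

lemma negp_nonpos (x : ℝ) : negp x ≤ 0 := min_le_right _ _

lemma abs_negp_le (x : ℝ) : |negp x| ≤ |x| := by
  rw [abs_le]
  exact ⟨le_min (neg_abs_le x) (neg_nonpos.2 (abs_nonneg x)),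
    (negp_nonpos x).trans (abs_nonneg x)⟩

lemma sq_negp_sub_le_sq_negp_sub {c₁ c₂ : ℝ} (hc : c₂ ≤ c₁) (x : ℝ) :
    negp (x - c₂) ^ 2 ≤ negp (x - c₁) ^ 2 := by
  have hle : negp (x - c₁) ≤ negp (x - c₂) := min_le_min (by linarith) le_rfl
  nlinarith [negp_nonpos (x - c₂)]

lemma sq_negp_sub_lt_sq_negp_sub {c₁ c₂ x : ℝ} (hc : c₂ < c₁) (hx : x < c₁) :
    negp (x - c₂) ^ 2 < negp (x - c₁) ^ 2 := by
  have heq : negp (x - c₁) = x - c₁ := min_eq_left (by linarith)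
  have hlt : negp (x - c₁) < negp (x - c₂) := by
    rw [heq]
    exact lt_min (by linarith) (by linarith)
  nlinarith [negp_nonpos (x - c₂)]

section SecondMoment

variable {Ω : Type*} [MeasurableSpace Ω] {P : Measure Ω} [IsFiniteMeasure P] {X : Ω → ℝ}

lemma integrable_sq_negp_sub (hX : MemLp X 2 P) (c : ℝ) :
    Integrable (fun ω => negp (X ω - c) ^ 2) P := by
  have hXc : MemLp (fun ω => X ω - c) 2 P := hX.sub (memLp_const c)
  refine MemLp.integrable_sq (hXc.mono ?_ (ae_of_all _ fun ω => abs_negp_le _))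
  exact continuous_negp.comp_aestronglyMeasurable hXc.1

lemma integral_sq_negp_sub_lt (hX : MemLp X 2 P) {c₁ c₂ : ℝ} (hc : c₂ < c₁)
    (hbelow : P {ω | X ω < c₁} ≠ 0) :
    ∫ ω, negp (X ω - c₂) ^ 2 ∂P < ∫ ω, negp (X ω - c₁) ^ 2 ∂P := by
  have hint₁ := integrable_sq_negp_sub hX c₁
  have hint₂ := integrable_sq_negp_sub hX c₂
  rw [← sub_pos, ← integral_sub hint₁ hint₂, integral_pos_iff_support_of_nonneg
    (fun ω => sub_nonneg.2 (sq_negp_sub_le_sq_negp_sub hc.le (X ω))) (hint₁.sub hint₂)]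
  refine (pos_iff_ne_zero.2 hbelow).trans_le (measure_mono fun ω hω => ?_)
  exact (sub_pos.2 (sq_negp_sub_lt_sq_negp_sub hc hω)).ne'

end SecondMoment

section Gaussian

instance : Measure.IsOpenPosMeasure _root_.stdGaussian :=
  (gaussianReal_absolutelyContinuous' 0 one_ne_zero).isOpenPosMeasure

variable {Ω : Type*} [MeasurableSpace Ω] {P : Measure Ω} {X : Ω → ℝ}

lemma memLp_two_of_map_eq_stdGaussian (hXm : Measurable X) (hX : P.map X = _root_.stdGaussian) :
    MemLp X 2 P := by
  have h : MemLp id 2 _root_.stdGaussian := memLp_id_gaussianReal' 2 ENNReal.ofNat_ne_top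
  rwa [← hX, memLp_map_measure_iff aestronglyMeasurable_id hXm.aemeasurable] at h

lemma measure_preimage_ne_zero_of_map_eq_stdGaussian (hXm : Measurable X)
    (hX : P.map X = _root_.stdGaussian) {U : Set ℝ} (hU : IsOpen U) (hne : U.Nonempty) :
    P (X ⁻¹' U) ≠ 0 := by
  rw [← Measure.map_apply hXm hU.measurableSet, hX]
  exact hU.measure_ne_zero _ hne

end Gaussian

lemma abs_mul_add_sqrt_mul_le {ρ : ℝ} (hρ : ρ ∈ Icc (-1 : ℝ) 1) (s h : ℝ) :
    |ρ * s + Real.sqrt (1 - ρ ^ 2) * h| ≤ |s| + |h| := by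
  have hρ' : |ρ| ≤ 1 := abs_le.mpr hρ
  have hsqrt : Real.sqrt (1 - ρ ^ 2) ≤ 1 := Real.sqrt_le_one.mpr (by nlinarith)
  calc |ρ * s + Real.sqrt (1 - ρ ^ 2) * h|
      ≤ |ρ| * |s| + Real.sqrt (1 - ρ ^ 2) * |h| := by
        rw [← abs_mul, ← abs_of_nonneg (Real.sqrt_nonneg (1 - ρ ^ 2)), ← abs_mul,
          abs_of_nonneg (Real.sqrt_nonneg _)]
        exact abs_add_le _ _
    _ ≤ 1 * |s| + 1 * |h| := by gcongr
    _ = |s| + |h| := by ring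

noncomputable def corrMix {Ω : Type*} (S H : Ω → ℝ) (ρ : ℝ) (ω : Ω) : ℝ :=
  ρ * S ω + Real.sqrt (1 - ρ ^ 2) * H ω

section CorrMix

variable {Ω : Type*} [MeasurableSpace Ω] {P : Measure Ω} {S H : Ω → ℝ}

lemma memLp_corrMix (hS : MemLp S 2 P) (hH : MemLp H 2 P) (ρ : ℝ) :
    MemLp (corrMix S H ρ) 2 P :=
  (hS.const_mul ρ).add (hH.const_mul _)

lemma continuousOn_integral_sq_negp_corrMix [IsFiniteMeasure P] (hS : MemLp S 2 P)
    (hH : MemLp H 2 P) (c : ℝ) :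
    ContinuousOn (fun ρ => ∫ ω, negp (corrMix S H ρ ω - c) ^ 2 ∂P) (Icc (-1) 1) := by
  refine continuousOn_of_dominated (bound := fun ω => (|S ω| + |H ω| + |c|) ^ 2)
    (fun ρ _ => (integrable_sq_negp_sub (memLp_corrMix hS hH ρ) c).1) (fun ρ hρ => ?_)
    ((hS.abs.add hH.abs).add (memLp_const |c|)).integrable_sq (ae_of_all _ fun ω => ?_)
  · refine ae_of_all _ fun ω => ?_
    have hmix : |corrMix S H ρ ω - c| ≤ |S ω| + |H ω| + |c| :=
      (abs_sub _ _).trans (add_le_add_left (abs_mul_add_sqrt_mul_le hρ (S ω) (H ω)) |c|)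
    rw [Real.norm_eq_abs, abs_pow]
    exact pow_le_pow_left₀ (abs_nonneg _) ((abs_negp_le _).trans hmix) 2
  · refine ((continuous_negp.comp ?_).pow 2).continuousOn
    unfold corrMix
    fun_prop

lemma measure_corrMix_lt_ne_zero (hind : IndepFun S H P) {ρ : ℝ} (hρ : ρ ∈ Icc (-1 : ℝ) 1)
    {c : ℝ} (hS : P (S ⁻¹' Metric.ball 0 (c / 2)) ≠ 0)
    (hH : P (H ⁻¹' Metric.ball 0 (c / 2)) ≠ 0) :
    P {ω | corrMix S H ρ ω < c} ≠ 0 := by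
  have hsub : S ⁻¹' Metric.ball 0 (c / 2) ∩ H ⁻¹' Metric.ball 0 (c / 2)
      ⊆ {ω | corrMix S H ρ ω < c} := by
    rintro ω ⟨hSω, hHω⟩
    simp only [mem_preimage, mem_ball_zero_iff, Real.norm_eq_abs] at hSω hHω
    have := abs_mul_add_sqrt_mul_le hρ (S ω) (H ω)
    exact (le_abs_self (corrMix S H ρ ω)).trans_lt (by unfold corrMix; linarith)
  have hprod : P (S ⁻¹' Metric.ball 0 (c / 2) ∩ H ⁻¹' Metric.ball 0 (c / 2)) ≠ 0 := by
    rw [hind.measure_inter_preimage_eq_mul _ _ measurableSet_ball measurableSet_ball]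
    exact mul_ne_zero hS hH
  exact fun h0 => hprod (measure_mono_null hsub h0)

end CorrMix

theorem etabar_strictAnti_general
    {Ω : Type*} [MeasurableSpace Ω] (P : Measure Ω) [IsProbabilityMeasure P]
    (κ : ℝ)
    (H G Y : Ω → ℝ)
    (hHm : Measurable H) (hGm : Measurable G) (hYm : Measurable Y)
    (hY : ∀ ω, Y ω = 1 ∨ Y ω = -1)
    (hH : Measure.map H P = _root_.stdGaussian) (hG : Measure.map G P = _root_.stdGaussian)
    (S : Ω → ℝ) (hS : S = fun ω => G ω * Y ω)
    (hindep : IndepFun S H P) :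
    StrictAntiOn (fun q : ℝ =>
        ⨅ ρ : Set.Icc (-1 : ℝ) 1,
          ((∫ ω, (negp ((ρ : ℝ) * S ω + Real.sqrt (1 - (ρ : ℝ) ^ 2) * H ω - 1 / q)) ^ 2 ∂P)
            - (1 - (ρ : ℝ) ^ 2) * κ))
      (Set.Ioi 0) := by
  have hSG : ∀ ω, ‖S ω‖ = ‖G ω‖ := fun ω => by
    rcases hY ω with h | h <;> simp [hS, h]
  have hSm : Measurable S := by
    rw [hS]
    exact hGm.mul hYm
  have hSL2 : MemLp S 2 P := (memLp_two_of_map_eq_stdGaussian hGm hG).congr_norm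
    hSm.aestronglyMeasurable (ae_of_all _ fun ω => (hSG ω).symm)
  have hHL2 : MemLp H 2 P := memLp_two_of_map_eq_stdGaussian hHm hH
  have hbelow : ∀ ρ ∈ Icc (-1 : ℝ) 1, ∀ c > 0, P {ω | corrMix S H ρ ω < c} ≠ 0 := by
    intro ρ hρ c hc
    have hball : (Metric.ball (0 : ℝ) (c / 2)).Nonempty := Metric.nonempty_ball.2 (by positivity)
    refine measure_corrMix_lt_ne_zero hindep hρ ?_
      (measure_preimage_ne_zero_of_map_eq_stdGaussian hHm hH Metric.isOpen_ball hball)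
    have hpre : S ⁻¹' Metric.ball 0 (c / 2) = G ⁻¹' Metric.ball 0 (c / 2) := by
      ext ω
      simp only [mem_preimage, mem_ball_zero_iff, hSG]
    rw [hpre]
    exact measure_preimage_ne_zero_of_map_eq_stdGaussian hGm hG Metric.isOpen_ball hball
  refine StrictMonoOn.comp_strictAntiOn (t := Ioi 0)
    (g := fun c => ⨅ ρ : Icc (-1 : ℝ) 1,
      (∫ ω, negp (corrMix S H ρ ω - c) ^ 2 ∂P) - (1 - (ρ : ℝ) ^ 2) * κ) ?_
    (fun q₁ hq₁ _ _ hq => one_div_lt_one_div_of_lt hq₁ hq)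
    (fun q hq => mem_Ioi.2 (one_div_pos.2 hq))
  refine StrictMonoOn.ciInf_of_isCompact isCompact_Icc ⟨0, by norm_num⟩
    (F := fun c ρ => (∫ ω, negp (corrMix S H ρ ω - c) ^ 2 ∂P) - (1 - ρ ^ 2) * κ)
    (fun c _ => (continuousOn_integral_sq_negp_corrMix hSL2 hHL2 c).sub (by fun_prop))
    (fun ρ hρ c₁ _ c₂ hc₂ hc => sub_lt_sub_right ?_ _)
  exact integral_sq_negp_sub_lt (memLp_corrMix hSL2 hHL2 ρ) hc (hbelow ρ hρ c₂ hc₂)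

/-- with `H` standard Gaussian, `S = GY` (`G` standard Gaussian, `Y ∈ {±1}`)
independent of `H`, such that `ρS + √(1−ρ²)H` has a strictly positive density on `ℝ` for every
`ρ ∈ [−1,1]`, the function `η̄(q) = min_{ρ∈[−1,1]} η(q, ρ)` is strictly decreasing on
`(0, ∞)`, where `η(q, ρ) = E[(ρS + H√(1−ρ²) − 1/q)₋²] − (1−ρ²)κ`. -/
theorem etabar_strictAnti
    {Ω : Type*} [MeasurableSpace Ω] (P : Measure Ω) [IsProbabilityMeasure P]
    (κ : ℝ) (hκ : 0 < κ)
    (H G Y : Ω → ℝ)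
    (hHm : Measurable H) (hGm : Measurable G) (hYm : Measurable Y)
    (hY : ∀ ω, Y ω = 1 ∨ Y ω = -1)
    (hH : Measure.map H P = _root_.stdGaussian) (hG : Measure.map G P = _root_.stdGaussian)
    (S : Ω → ℝ) (hS : S = fun ω => G ω * Y ω)
    (hindep : IndepFun S H P)
    (hdens : ∀ ρ ∈ Set.Icc (-1 : ℝ) 1, ∃ f : ℝ → ℝ, (∀ x, 0 < f x) ∧
      Measure.map (fun ω => ρ * S ω + Real.sqrt (1 - ρ ^ 2) * H ω) P
        = (volume : Measure ℝ).withDensity fun x => ENNReal.ofReal (f x)) :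
    StrictAntiOn (fun q : ℝ =>
        ⨅ ρ : Set.Icc (-1 : ℝ) 1,
          ((∫ ω, (negp ((ρ : ℝ) * S ω + Real.sqrt (1 - (ρ : ℝ) ^ 2) * H ω - 1 / q)) ^ 2 ∂P)
            - (1 - (ρ : ℝ) ^ 2) * κ))
      (Set.Ioi 0) :=
  etabar_strictAnti_general P κ H G Y hHm hGm hYm hY hH hG S hS hindep
end

section
/- Let ℓ(t) = log(1 + e^{−t}) be the logistic loss and λ > 0. Let H be standard Gaussian, and X = GY with G standard Gaussian independent of H and Y ∈ {±1} a label so that (H, X) has a strictly positive joint density on ℝ². Fix pairs (α₁, Υ₁) ≠ (α₂, Υ₂) with α₁, α₂ > 0, and write P_i(h, x) = prox_{α_i ℓ(·/α_i)}(h + Υ_i x; λ) for i = 1, 2. Then there exists a ball S ⊂ ℝ² with P((H, X) ∈ S) > 0 on which P₁(h, x)/α₁ ≠ P₂(h, x)/α₂ for all (h, x) ∈ S; consequently, for every θ ∈ (0, 1) with θ̄ = 1 − θ, the strict inequality E[ℓ(θ P₁(H,X)/α₁ + θ̄ P₂(H,X)/α₂)] < θ E[ℓ(P₁(H,X)/α₁)]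 + θ̄ E[ℓ(P₂(H,X)/α₂)] holds. -/
open MeasureTheory ProbabilityTheory Filter Set

/-- The logistic loss `ℓ(t) = log(1 + e^{−t})`. -/
noncomputable def logisticLoss (t : ℝ) : ℝ := Real.log (1 + Real.exp (-t))

/-- `v` is the proximal point `prox_g(x; λ)`, i.e. the minimizer of
`v ↦ (1/(2λ))(x − v)² + g(v)`. -/
def IsProxOf (g : ℝ → ℝ) (lam x v : ℝ) : Prop :=
  ∀ w : ℝ, (1 / (2 * lam)) * (x - v) ^ 2 + g v ≤ (1 / (2 * lam)) * (x - w) ^ 2 + g w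

/-!
The normalized prox maps `Rᵢ = Pᵢ / αᵢ` are continuous (a prox map is 1-Lipschitz) and are
inverted by `t ↦ αᵢ t - λ (1 + eᵗ)⁻¹`. Where `R₁ (h + Υ₁ x) = R₂ (h + Υ₂ x) = t`, subtracting
the two inverse relations gives `(α₁ - α₂) t = (Υ₁ - Υ₂) x`, so for `x ≠ 0` at most one `h`
qualifies: the equality set is closed and Lebesgue-null, hence null for the law of `(H, X)`,
which has a density. Its open complement has full probability, so by second countability it
contains a ball of positive probability. There the two arguments of `ℓ` differ, and strict
convexity makes the integrated Jensen inequality strict. Integrability comes from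
`ℓ (Pᵢ z / αᵢ) ≤ ℓ (z / αᵢ) ≤ log 2 + |z| / αᵢ` and the Gaussian first moments.
-/

open Real

theorem hasDerivAt_logisticLoss (t : ℝ) :
    HasDerivAt logisticLoss (-(1 + exp t)⁻¹) t := by
  refine ((((hasDerivAt_neg t).exp).const_add 1).log (by positivity)).congr_deriv ?_
  rw [exp_neg]
  field_simp
  ring

theorem continuous_logisticLoss : Continuous logisticLoss :=
  continuous_iff_continuousAt.2 fun t => (hasDerivAt_logisticLoss t).continuousAt

theorem strictConvexOn_logisticLoss : StrictConvexOn ℝ univ logisticLoss := by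
  refine StrictMonoOn.strictConvexOn_of_deriv convex_univ
    continuous_logisticLoss.continuousOn fun a _ b _ hab => ?_
  simp only [(hasDerivAt_logisticLoss _).deriv, neg_lt_neg_iff]
  gcongr

theorem logisticLoss_nonneg (t : ℝ) : 0 ≤ logisticLoss t :=
  log_nonneg (le_add_of_nonneg_right (exp_nonneg _))

theorem logisticLoss_le_log_two_add_abs (t : ℝ) : logisticLoss t ≤ log 2 + |t| := by
  have h : 1 + exp (-t) ≤ 2 * exp |t| := by
    linarith [one_le_exp (abs_nonneg t), exp_le_exp.2 (neg_le_abs t)]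
  calc logisticLoss t ≤ log (2 * exp |t|) := log_le_log (by positivity) h
    _ = log 2 + |t| := by rw [log_mul two_ne_zero (exp_ne_zero _), log_exp]

section Prox

variable {g : ℝ → ℝ} {lam x v : ℝ}

theorem IsProxOf.add_mul_eq {g' : ℝ} (hlam : lam ≠ 0) (hg : HasDerivAt g g' v)
    (h : IsProxOf g lam x v) : v + lam * g' = x := by
  have hsq : HasDerivAt (fun w => 1 / (2 * lam) * (x - w) ^ 2) ((v - x) / lam) v := by
    refine ((((hasDerivAt_id v).const_sub x).pow 2).const_mul (1 / (2 * lam))).congr_deriv ?_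
    simp only [id]
    field_simp
    ring
  have hmin : IsLocalMin (fun w => 1 / (2 * lam) * (x - w) ^ 2 + g w) v :=
    Eventually.of_forall h
  have hzero := hmin.hasDerivAt_eq_zero (hsq.add hg)
  field_simp at hzero
  linarith

theorem IsProxOf.apply_le (hlam : 0 ≤ lam) (h : IsProxOf g lam x v) : g v ≤ g x := by
  have hx := h x
  have hsq : 0 ≤ 1 / (2 * lam) * (x - v) ^ 2 := by positivity
  simp only [sub_self, ne_eq, OfNat.ofNat_ne_zero, not_false_eq_true, zero_pow, mul_zero,
    zero_add] at hx
  linarith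

end Prox

section Resolvent

variable {g' Q : ℝ → ℝ} {lam : ℝ}

theorem lipschitzWith_one_of_rightInverse (hg' : Monotone g') (hlam : 0 ≤ lam)
    (hQ : Function.RightInverse Q fun v => v + lam * g' v) : LipschitzWith 1 Q := by
  have key : ∀ z w, Q w ≤ Q z → Q z - Q w ≤ z - w := fun z w hzw => by
    have := mul_le_mul_of_nonneg_left (hg' hzw) hlam
    linarith [hQ z, hQ w]
  refine LipschitzWith.of_dist_le_mul fun z w => ?_
  rw [NNReal.coe_one, one_mul, dist_eq, dist_eq, abs_sub_le_iff]
  rcases le_total (Q w) (Q z) with h | h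
  · have := key z w h
    constructor <;> linarith [le_abs_self (z - w), abs_nonneg (z - w)]
  · have := key w z h
    constructor <;> linarith [neg_abs_le (z - w), abs_nonneg (z - w)]

end Resolvent

section ScaledLogistic

variable {α lam z v : ℝ} {Q : ℝ → ℝ}

theorem hasDerivAt_mul_logisticLoss_div (hα : α ≠ 0) (v : ℝ) :
    HasDerivAt (fun v => α * logisticLoss (v / α)) (-(1 + exp (v / α))⁻¹) v := by
  refine (((hasDerivAt_logisticLoss (v / α)).comp v
    ((hasDerivAt_id v).div_const α)).const_mul α).congr_deriv ?_
  field_simp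

theorem monotone_neg_inv_one_add_exp_div (hα : 0 ≤ α) :
    Monotone fun v : ℝ => -(1 + exp (v / α))⁻¹ := fun a b hab => by
  simp only [neg_le_neg_iff]
  gcongr

theorem IsProxOf.mul_div_sub_eq (hα : 0 < α) (hlam : 0 < lam)
    (h : IsProxOf (fun v => α * logisticLoss (v / α)) lam z v) :
    α * (v / α) - lam * (1 + exp (v / α))⁻¹ = z := by
  have := h.add_mul_eq hlam.ne' (hasDerivAt_mul_logisticLoss_div hα.ne' v)
  rw [mul_div_cancel₀ v hα.ne']
  linarith

theorem lipschitzWith_one_of_forall_isProxOf (hα : 0 < α) (hlam : 0 < lam)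
    (hQ : ∀ z, IsProxOf (fun v => α * logisticLoss (v / α)) lam z (Q z)) :
    LipschitzWith 1 Q :=
  lipschitzWith_one_of_rightInverse (monotone_neg_inv_one_add_exp_div hα.le) hlam.le
    fun z => (hQ z).add_mul_eq hlam.ne' (hasDerivAt_mul_logisticLoss_div hα.ne' _)

end ScaledLogistic

section EqualitySet

variable {c R₁ R₂ : ℝ → ℝ} {α₁ α₂ Υ₁ Υ₂ : ℝ}

theorem subsingleton_setOf_eq_of_ne_zero (hR₁ : ∀ z, α₁ * R₁ z - c (R₁ z) = z)
    (hR₂ : ∀ z, α₂ * R₂ z - c (R₂ z) = z) (hne : (α₁, Υ₁) ≠ (α₂, Υ₂)) {x : ℝ} (hx : x ≠ 0) :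
    {h : ℝ | R₁ (h + Υ₁ * x) = R₂ (h + Υ₂ * x)}.Subsingleton := by
  intro h hh h' hh'
  have e₁ := hR₁ (h + Υ₁ * x)
  have e₁' := hR₁ (h' + Υ₁ * x)
  have e₂ := hR₂ (h + Υ₂ * x)
  have e₂' := hR₂ (h' + Υ₂ * x)
  rw [← show R₁ _ = R₂ _ from hh] at e₂
  rw [← show R₁ _ = R₂ _ from hh'] at e₂'
  have hα : α₁ - α₂ ≠ 0 := by
    intro hα
    have : (Υ₁ - Υ₂) * x = 0 := by linear_combination e₂ - e₁ + R₁ (h + Υ₁ * x) * hα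
    exact hne (by rw [sub_eq_zero.1 hα, sub_eq_zero.1 ((mul_eq_zero.1 this).resolve_right hx)])
  have ht : R₁ (h + Υ₁ * x) = R₁ (h' + Υ₁ * x) := by
    have : (α₁ - α₂) * (R₁ (h + Υ₁ * x) - R₁ (h' + Υ₁ * x)) = 0 := by
      linear_combination e₁ - e₂ - e₁' + e₂'
    exact sub_eq_zero.1 ((mul_eq_zero.1 this).resolve_left hα)
  rw [ht] at e₁
  linarith

theorem volume_setOf_eq_eq_zero (hR₁m : Measurable R₁) (hR₂m : Measurable R₂)
    (hR₁ : ∀ z, α₁ * R₁ z - c (R₁ z) = z) (hR₂ : ∀ z, α₂ * R₂ z - c (R₂ z) = z)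
    (hne : (α₁, Υ₁) ≠ (α₂, Υ₂)) :
    volume {z : ℝ × ℝ | R₁ (z.1 + Υ₁ * z.2) = R₂ (z.1 + Υ₂ * z.2)} = 0 := by
  have hm : MeasurableSet {z : ℝ × ℝ | R₁ (z.1 + Υ₁ * z.2) = R₂ (z.1 + Υ₂ * z.2)} :=
    measurableSet_eq_fun (hR₁m.comp (by fun_prop)) (hR₂m.comp (by fun_prop))
  have hae_ne_zero : ∀ᵐ x : ℝ, x ≠ 0 := by simp [ae_iff]
  rw [Measure.volume_eq_prod, Measure.prod_apply_symm hm]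
  refine (lintegral_congr_ae ?_).trans lintegral_zero
  filter_upwards [hae_ne_zero] with x hx
  exact (subsingleton_setOf_eq_of_ne_zero hR₁ hR₂ hne hx).measure_zero _

end EqualitySet

theorem exists_ball_subset_compl_measure_preimage_pos {Ω E : Type*} [MeasurableSpace Ω]
    {P : Measure Ω} [IsProbabilityMeasure P] [PseudoMetricSpace E] [SecondCountableTopology E]
    [MeasurableSpace E] [OpensMeasurableSpace E] {T : Ω → E} (hT : Measurable T) {C : Set E}
    (hC : IsClosed C) (hCnull : P.map T C = 0) :
    ∃ c r, 0 < r ∧ Metric.ball c r ⊆ Cᶜ ∧ 0 < P (T ⁻¹' Metric.ball c r) := by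
  have := Measure.isProbabilityMeasure_map (μ := P) hT.aemeasurable
  have hcompl : P.map T Cᶜ ≠ 0 := by
    rw [measure_compl hC.measurableSet (measure_ne_top _ _), hCnull, measure_univ]
    simp
  obtain ⟨c, hc, hpos⟩ := exists_mem_forall_mem_nhdsWithin_pos_measure hcompl
  obtain ⟨r, hr, hball⟩ := Metric.isOpen_iff.1 hC.isOpen_compl c hc
  refine ⟨c, r, hr, hball, ?_⟩
  rw [← Measure.map_apply hT measurableSet_ball]
  exact hpos _ (mem_nhdsWithin_of_mem_nhds (Metric.ball_mem_nhds c hr))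

section Integrals

variable {Ω : Type*} [MeasurableSpace Ω] {μ : Measure Ω}

theorem StrictConvexOn.integral_comp_convexCombination_lt {φ : ℝ → ℝ}
    (hφ : StrictConvexOn ℝ univ φ) (hφ₀ : ∀ t, 0 ≤ φ t) {A B : Ω → ℝ} (hA : Measurable A)
    (hB : Measurable B) (hφA : Integrable (fun ω => φ (A ω)) μ)
    (hφB : Integrable (fun ω => φ (B ω)) μ) (hAB : 0 < μ {ω | A ω ≠ B ω}) {θ : ℝ}
    (hθ : θ ∈ Ioo (0 : ℝ) 1) :
    ∫ ω, φ (θ * A ω + (1 - θ) * B ω) ∂μ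
      < θ * ∫ ω, φ (A ω) ∂μ + (1 - θ) * ∫ ω, φ (B ω) ∂μ := by
  obtain ⟨hθ₀, hθ₁⟩ := hθ
  have hφc : Continuous φ := continuousOn_univ.1 (hφ.convexOn.continuousOn isOpen_univ)
  have hθ₁' : 0 < 1 - θ := sub_pos.2 hθ₁
  have hsum : θ + (1 - θ) = 1 := add_sub_cancel θ 1
  have hjensen : ∀ ω, φ (θ * A ω + (1 - θ) * B ω) ≤ θ * φ (A ω) + (1 - θ) * φ (B ω) :=
    fun ω => hφ.convexOn.2 (mem_univ _) (mem_univ _) hθ₀.le hθ₁'.le hsum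
  have hRHS : Integrable (fun ω => θ * φ (A ω) + (1 - θ) * φ (B ω)) μ :=
    (hφA.const_mul θ).add (hφB.const_mul (1 - θ))
  have hLHS : Integrable (fun ω => φ (θ * A ω + (1 - θ) * B ω)) μ :=
    hRHS.mono' (hφc.comp_aestronglyMeasurable
      ((hA.const_mul θ).add (hB.const_mul _)).aestronglyMeasurable)
      (ae_of_all _ fun ω => (norm_of_nonneg (hφ₀ _)).trans_le (hjensen ω))
  have hgap : 0 < ∫ ω, (θ * φ (A ω) + (1 - θ) * φ (B ω)) - φ (θ * A ω + (1 - θ) * B ω) ∂μ := by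
    rw [integral_pos_iff_support_of_nonneg (fun ω => sub_nonneg.2 (hjensen ω)) (hRHS.sub hLHS)]
    refine hAB.trans_le (measure_mono fun ω hω => Function.mem_support.2 ?_)
    exact (sub_pos.2 (hφ.2 (mem_univ _) (mem_univ _) hω hθ₀ hθ₁' hsum)).ne'
  rw [integral_sub hRHS hLHS, integral_add (hφA.const_mul θ) (hφB.const_mul _),
    integral_const_mul, integral_const_mul] at hgap
  linarith

theorem integrable_logisticLoss_div_of_isProxOf [IsFiniteMeasure μ] {α lam : ℝ}
    {Q : ℝ → ℝ} {Z : Ω → ℝ} (hZ : Integrable Z μ) (hα : 0 < α) (hlam : 0 ≤ lam)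
    (hQm : Measurable Q) (hQ : ∀ z, IsProxOf (fun v => α * logisticLoss (v / α)) lam z (Q z)) :
    Integrable (fun ω => logisticLoss (Q (Z ω) / α)) μ := by
  refine ((integrable_const (log 2)).add (hZ.abs.div_const α)).mono'
    ((continuous_logisticLoss.measurable.comp (hQm.div_const α)).comp_aemeasurable
      hZ.aemeasurable).aestronglyMeasurable (ae_of_all _ fun ω => ?_)
  rw [norm_of_nonneg (logisticLoss_nonneg _)]
  calc logisticLoss (Q (Z ω) / α) ≤ logisticLoss (Z ω / α) :=
        le_of_mul_le_mul_left (show α * logisticLoss (Q (Z ω) / α) ≤ α * logisticLoss (Z ω / α)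
          from (hQ (Z ω)).apply_le (g := fun v => α * logisticLoss (v / α)) hlam) hα
    _ ≤ log 2 + |Z ω / α| := logisticLoss_le_log_two_add_abs _
    _ = log 2 + |Z ω| / α := by rw [abs_div, abs_of_pos hα]

theorem integrable_of_map_eq_stdGaussian {H : Ω → ℝ} (hHm : Measurable H)
    (hH : μ.map H = _root_.stdGaussian) : Integrable H μ := by
  have hid : Integrable id (μ.map H) := by
    rw [hH]
    exact IsGaussian.integrable_id (μ := gaussianReal 0 1)
  exact hid.comp_measurable hHm

end Integrals

theorem prox_logistic_strict_jensen_general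
    {Ω : Type*} [MeasurableSpace Ω] (P : Measure Ω) [IsProbabilityMeasure P]
    (H G Y : Ω → ℝ)
    (hHm : Measurable H) (hGm : Measurable G) (hYm : Measurable Y)
    (hY : ∀ ω, Y ω = 1 ∨ Y ω = -1)
    (hH : Measure.map H P = _root_.stdGaussian) (hG : Measure.map G P = _root_.stdGaussian)
    (X : Ω → ℝ) (hX : X = fun ω => G ω * Y ω)
    (dens : ℝ × ℝ → ℝ)
    (hjoint : Measure.map (fun ω => (H ω, X ω)) P
      = (volume : Measure (ℝ × ℝ)).withDensity fun z => ENNReal.ofReal (dens z))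
    (lam α₁ α₂ Υ₁ Υ₂ : ℝ) (hlam : 0 < lam) (hα₁ : 0 < α₁) (hα₂ : 0 < α₂)
    (hne : (α₁, Υ₁) ≠ (α₂, Υ₂))
    (P₁ P₂ : ℝ → ℝ)
    (hP₁ : ∀ z : ℝ, IsProxOf (fun v => α₁ * logisticLoss (v / α₁)) lam z (P₁ z))
    (hP₂ : ∀ z : ℝ, IsProxOf (fun v => α₂ * logisticLoss (v / α₂)) lam z (P₂ z)) :
    (∃ c : ℝ × ℝ, ∃ rad : ℝ, 0 < rad ∧
      0 < P {ω | (H ω, X ω) ∈ Metric.ball c rad} ∧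
      ∀ z ∈ Metric.ball c rad,
        P₁ (z.1 + Υ₁ * z.2) / α₁ ≠ P₂ (z.1 + Υ₂ * z.2) / α₂) ∧
    ∀ θ : ℝ, θ ∈ Set.Ioo (0 : ℝ) 1 →
      (∫ ω, logisticLoss (θ * (P₁ (H ω + Υ₁ * X ω) / α₁)
          + (1 - θ) * (P₂ (H ω + Υ₂ * X ω) / α₂)) ∂P)
        < θ * (∫ ω, logisticLoss (P₁ (H ω + Υ₁ * X ω) / α₁) ∂P)
          + (1 - θ) * (∫ ω, logisticLoss (P₂ (H ω + Υ₂ * X ω) / α₂) ∂P) := by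
  have hXm : Measurable X := hX ▸ hGm.mul hYm
  have hT : Measurable fun ω => (H ω, X ω) := hHm.prodMk hXm
  have hP₁c := (lipschitzWith_one_of_forall_isProxOf hα₁ hlam hP₁).continuous
  have hP₂c := (lipschitzWith_one_of_forall_isProxOf hα₂ hlam hP₂).continuous
  have hCnull : Measure.map (fun ω => (H ω, X ω)) P
      {z | P₁ (z.1 + Υ₁ * z.2) / α₁ = P₂ (z.1 + Υ₂ * z.2) / α₂} = 0 := by
    rw [hjoint]
    exact withDensity_absolutelyContinuous _ _ (volume_setOf_eq_eq_zero
      (c := fun t => lam * (1 + exp t)⁻¹) (by fun_prop) (by fun_prop)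
      (fun z => (hP₁ z).mul_div_sub_eq hα₁ hlam) (fun z => (hP₂ z).mul_div_sub_eq hα₂ hlam) hne)
  obtain ⟨c, rad, hrad, hball, hpos⟩ := exists_ball_subset_compl_measure_preimage_pos hT
    (isClosed_eq (by fun_prop) (by fun_prop)) hCnull
  refine ⟨⟨c, rad, hrad, hpos, fun z hz => hball hz⟩, fun θ hθ => ?_⟩
  have hXi : Integrable X P := (integrable_of_map_eq_stdGaussian hGm hG).mono
    hXm.aestronglyMeasurable (ae_of_all _ fun ω => by rcases hY ω with h | h <;> simp [hX, h])
  have hZ (Υ : ℝ) : Integrable (fun ω => H ω + Υ * X ω) P :=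
    (integrable_of_map_eq_stdGaussian hHm hH).add (hXi.const_mul Υ)
  exact strictConvexOn_logisticLoss.integral_comp_convexCombination_lt logisticLoss_nonneg
    (by fun_prop) (by fun_prop)
    (integrable_logisticLoss_div_of_isProxOf (hZ Υ₁) hα₁ hlam.le hP₁c.measurable hP₁)
    (integrable_logisticLoss_div_of_isProxOf (hZ Υ₂) hα₂ hlam.le hP₂c.measurable hP₂)
    (hpos.trans_le (measure_mono fun ω hω => hball hω)) hθ

/-- for `(α₁, Υ₁) ≠ (α₂, Υ₂)`, `H` standard Gaussian and `X = GY` (with `G`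
standard Gaussian independent of `H`, `Y ∈ {±1}`) such that `(H, X)` has a strictly positive
joint density on `ℝ²`, there is a ball `S ⊆ ℝ²` of positive probability on which
`P₁(h,x)/α₁ ≠ P₂(h,x)/α₂`; consequently the strict Jensen inequality
`E[ℓ(θP₁/α₁ + (1−θ)P₂/α₂)] < θE[ℓ(P₁/α₁)] + (1−θ)E[ℓ(P₂/α₂)]` holds for all `θ ∈ (0,1)`,
where `Pᵢ = Pᵢ(H, X) = prox_{αᵢℓ(·/αᵢ)}(H + Υᵢ X; λ)`. -/
theorem prox_logistic_strict_jensen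
    {Ω : Type*} [MeasurableSpace Ω] (P : Measure Ω) [IsProbabilityMeasure P]
    (H G Y : Ω → ℝ)
    (hHm : Measurable H) (hGm : Measurable G) (hYm : Measurable Y)
    (hY : ∀ ω, Y ω = 1 ∨ Y ω = -1)
    (hH : Measure.map H P = _root_.stdGaussian) (hG : Measure.map G P = _root_.stdGaussian)
    (hindep : IndepFun G H P)
    (X : Ω → ℝ) (hX : X = fun ω => G ω * Y ω)
    (dens : ℝ × ℝ → ℝ) (hdens : ∀ z, 0 < dens z)
    (hjoint : Measure.map (fun ω => (H ω, X ω)) P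
      = (volume : Measure (ℝ × ℝ)).withDensity fun z => ENNReal.ofReal (dens z))
    (lam α₁ α₂ Υ₁ Υ₂ : ℝ) (hlam : 0 < lam) (hα₁ : 0 < α₁) (hα₂ : 0 < α₂)
    (hne : (α₁, Υ₁) ≠ (α₂, Υ₂))
    (P₁ P₂ : ℝ → ℝ)
    (hP₁ : ∀ z : ℝ, IsProxOf (fun v => α₁ * logisticLoss (v / α₁)) lam z (P₁ z))
    (hP₂ : ∀ z : ℝ, IsProxOf (fun v => α₂ * logisticLoss (v / α₂)) lam z (P₂ z)) :
    (∃ c : ℝ × ℝ, ∃ rad : ℝ, 0 < rad ∧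
      0 < P {ω | (H ω, X ω) ∈ Metric.ball c rad} ∧
      ∀ z ∈ Metric.ball c rad,
        P₁ (z.1 + Υ₁ * z.2) / α₁ ≠ P₂ (z.1 + Υ₂ * z.2) / α₂) ∧
    ∀ θ : ℝ, θ ∈ Set.Ioo (0 : ℝ) 1 →
      (∫ ω, logisticLoss (θ * (P₁ (H ω + Υ₁ * X ω) / α₁)
          + (1 - θ) * (P₂ (H ω + Υ₂ * X ω) / α₂)) ∂P)
        < θ * (∫ ω, logisticLoss (P₁ (H ω + Υ₁ * X ω) / α₁) ∂P)
          + (1 - θ) * (∫ ω, logisticLoss (P₂ (H ω + Υ₂ * X ω) / α₂) ∂P) :=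
  prox_logistic_strict_jensen_general P H G Y hHm hGm hYm hY hH hG X hX dens hjoint lam α₁ α₂ Υ₁ Υ₂
    hlam hα₁ hα₂ hne P₁ P₂ hP₁ hP₂
end
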